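/- Let W = (ω_1,…,ω_n) be a suitable basis of A with eW′ = MW, let U be an integral basis of A, and let T ∈ K[x]^{n×n} be such that W = TU. Let h = Σ_{i=1}^n (h_i/(de)) ω_i with h_i, d ∈ K[x], gcd(d, e) = 1, gcd(h_1,…,h_n, d) = 1, and d squarefree. If h is integrable in A, say h = (Σ_{i=1}^n (q_i/u) ω_i)′ with u, q_1,…,q_n ∈ K[x] and gcd(q_1,…,q_n, u) = 1, then u divides det(T); hence u² divides the polynomial Disc(W)/Disc(U). -/

import Mathlib

/-!
Put `g = Σ (qᵢ/u) ωᵢ`, so that `h = g′`. At every point `a`, each Puiseux expansion of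
`d e h = Σ hᵢ ωᵢ` has nonnegative valuation, and `d e` is squarefree, so its expansion has
valuation at most `1`; hence `h` has valuation at least `-1`. In characteristic zero,
differentiation lowers a negative valuation by exactly one, so `g` is integral and
`g = Σ cⱼ Uⱼ` with `cⱼ ∈ K[x]`. Comparing coefficients in `u g = Σ qᵢ ωᵢ = Σ qᵢ Tᵢⱼ Uⱼ` gives
`q T = u c`; multiplying by `adj T` shows `u ∣ det T · qᵢ` for all `i`, and `gcd(q, u) = 1`
gives `u ∣ det T`. Finally `Disc(W) = det(T)² Disc(U)`.
-/

noncomputable section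
open scoped Classical

open Polynomial

/-- Termwise derivative (w.r.t. `x`) of a generalized (Hahn/Puiseux) series in `x - a`:
the exponent-`q` coefficient of `P'` is `(q+1)` times the exponent-`(q+1)` coefficient of `P`. -/
def hderiv {F : Type} [Field F] (P : HahnSeries ℚ F) : HahnSeries ℚ F where
  coeff q := ((q + 1 : ℚ) : F) * P.coeff (q + 1)
  isPWO_support' := by
    have hsub : (Function.support fun q : ℚ => ((q + 1 : ℚ) : F) * P.coeff (q + 1))
        ⊆ (fun q : ℚ => q - 1) '' P.support := by
      intro q hq
      refine ⟨q + 1, ?_, by ring⟩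
      intro h0
      simp [Function.mem_support, h0] at hq
    exact (P.isPWO_support.image_of_monotoneOn
      (fun x _ y _ hxy => by simpa using hxy)).mono hsub

/-- The valuation of a generalized (Hahn/Puiseux) series: the least exponent occurring,
and `⊤` for the zero series. -/
def hval {F : Type} [Field F] (P : HahnSeries ℚ F) : WithTop ℚ :=
  if h : P = 0 then ⊤
  else ((P.isWF_support.min (HahnSeries.support_nonempty_iff.mpr h) : ℚ) : WithTop ℚ)

/-- A series is ramified if some exponent in its support is not an integer. -/
def Ramified {F : Type} [Field F] (P : HahnSeries ℚ F) : Prop :=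
  ∃ q ∈ P.support, ∀ z : ℤ, (z : ℚ) ≠ q

/-- The set of fractional (non-integer) exponents occurring in a series. -/
def fracSupport {F : Type} [Field F] (P : HahnSeries ℚ F) : Set ℚ :=
  {q | q ∈ P.support ∧ ∀ z : ℤ, (z : ℚ) ≠ q}

/-- The minimal fractional exponent `δ(P)` of a series; `⊤` if `P` is not ramified. -/
def delta {F : Type} [Field F] (P : HahnSeries ℚ F) : WithTop ℚ :=
  if h : (fracSupport P).Nonempty then
    (((P.isWF_support.mono (fun q hq => hq.1)).min h : ℚ) : WithTop ℚ)
  else ⊤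

/-- A Hahn series over `ℚ` is a Puiseux series if its exponents have a common denominator. -/
def IsPuiseux {F : Type} [Field F] (P : HahnSeries ℚ F) : Prop :=
  ∃ r : ℕ, 0 < r ∧ ∀ q ∈ P.support, ∃ z : ℤ, (z : ℚ) / r = q

/-! ### The algebraic function field `A = K(x)[y]/⟨m⟩` -/

/-- The canonical image in `A = K(x)[y]/⟨m⟩` of a polynomial `p ∈ K[x]`. -/
def toA {K : Type} [Field K] (m : Polynomial (RatFunc K)) (p : Polynomial K) :
    AdjoinRoot m :=
  algebraMap (RatFunc K) (AdjoinRoot m) (algebraMap (Polynomial K) (RatFunc K) p)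

/-- `D` is the derivation on `A = K(x)[y]/⟨m⟩` extending `d/dx` on `K(x)`:
it is additive, satisfies the Leibniz rule, and restricts to `d/dx` on `K[x]`
(hence, being a derivation on a field, on all of `K(x)`). -/
structure IsDerivationOnA {K : Type} [Field K] (m : Polynomial (RatFunc K))
    (D : AdjoinRoot m → AdjoinRoot m) : Prop where
  map_add : ∀ f g, D (f + g) = D f + D g
  leibniz : ∀ f g, D (f * g) = f * D g + g * D f
  map_poly : ∀ p : Polynomial K, D (toA m p) = toA m (Polynomial.derivative p)

/-- `W` is a basis of `A` as a vector space over `K(x)`. -/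
def IsKxBasis {K : Type} [Field K] {m : Polynomial (RatFunc K)}
    (W : Fin m.natDegree → AdjoinRoot m) : Prop :=
  LinearIndependent (RatFunc K) W ∧ Submodule.span (RatFunc K) (Set.range W) = ⊤

/-- `e W′ = M W` componentwise. -/
def DerivRel {K : Type} [Field K] {m : Polynomial (RatFunc K)}
    (D : AdjoinRoot m → AdjoinRoot m) (W : Fin m.natDegree → AdjoinRoot m)
    (e : Polynomial K) (M : Matrix (Fin m.natDegree) (Fin m.natDegree) (Polynomial K)) : Prop :=
  ∀ i, toA m e * D (W i) = ∑ j, toA m (M i j) * W j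

/-- `gcd(e, m₁₁, …, mₙₙ) = 1`: the only common divisors of `e` and the entries of `M`
are units. -/
def GcdOne {K : Type} [Field K] {n : ℕ}
    (e : Polynomial K) (M : Matrix (Fin n) (Fin n) (Polynomial K)) : Prop :=
  ∀ p : Polynomial K, p ∣ e → (∀ i j, p ∣ M i j) → IsUnit p

/-! ### Puiseux expansions around a point `a` of the algebraic closure -/

/-- The family of the `n` distinct `K(x)`-embeddings of `A = K(x)[y]/⟨m⟩` into the field of
Puiseux series around a point `a`: each embedding is a ring homomorphism into the Hahn series
field whose values are Puiseux series, sending constants `c ∈ K` to constant series and the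
rational function `x` to `a + (x - a)`, i.e. to the series `a + t` where `t` stands
for `x - a`. -/
structure EmbFamily (K F : Type) [Field K] [Field F] [Algebra K F]
    (m : Polynomial (RatFunc K)) (a : F) where
  emb : Fin m.natDegree → (AdjoinRoot m →+* HahnSeries ℚ F)
  emb_injective : Function.Injective emb
  emb_C : ∀ i (c : K), emb i (toA m (Polynomial.C c)) = HahnSeries.single 0 (algebraMap K F c)
  emb_X : ∀ i, emb i (toA m Polynomial.X) =
    HahnSeries.single 0 a + HahnSeries.single 1 1
  emb_puiseux : ∀ i f, IsPuiseux (emb i f)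

/-- The embeddings around `a` are differential homomorphisms: they intertwine the derivation
`D` on `A` with the termwise derivative of series. -/
def IsDiffFamily {K F : Type} [Field K] [Field F] [Algebra K F]
    {m : Polynomial (RatFunc K)} {a : F} (D : AdjoinRoot m → AdjoinRoot m)
    (σ : EmbFamily K F m a) : Prop :=
  ∀ i f, σ.emb i (D f) = hderiv (σ.emb i f)

/-- `f ∈ A` is locally integral at `a`, i.e. `val_a(f) ≥ 0`: all Puiseux series associated
to `f` around `a` have nonnegative valuation. -/
def LocIntegralAt {K F : Type} [Field K] [Field F] [Algebra K F]
    {m : Polynomial (RatFunc K)} {a : F} (σ : EmbFamily K F m a)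
    (f : AdjoinRoot m) : Prop :=
  ∀ i, 0 ≤ hval (σ.emb i f)

/-- `a` is a branch point of `f ∈ A`: one of the Puiseux series associated to `f` around `a`
is ramified. -/
def IsBranchPointOf {K F : Type} [Field K] [Field F] [Algebra K F]
    {m : Polynomial (RatFunc K)} {a : F} (σ : EmbFamily K F m a)
    (f : AdjoinRoot m) : Prop :=
  ∃ i, Ramified (σ.emb i f)

/-- `f ∈ A` is (globally) integral: locally integral at every point `a` of the algebraic
closure of `K` (given the system `σ` of Puiseux expansions around each point). -/
def IntegralElem {K : Type} [Field K] {m : Polynomial (RatFunc K)}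
    (σ : ∀ a : AlgebraicClosure K, EmbFamily K (AlgebraicClosure K) m a)
    (f : AdjoinRoot m) : Prop :=
  ∀ a, LocIntegralAt (σ a) f

/-- `W` is an integral basis of `A`: a `K(x)`-vector-space basis consisting of integral
elements such that every integral element is a `K[x]`-linear combination of `W`. -/
def IsIntegralBasis {K : Type} [Field K] {m : Polynomial (RatFunc K)}
    (σ : ∀ a : AlgebraicClosure K, EmbFamily K (AlgebraicClosure K) m a)
    (W : Fin m.natDegree → AdjoinRoot m) : Prop :=
  IsKxBasis W ∧ (∀ i, IntegralElem σ (W i)) ∧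
    ∀ f, IntegralElem σ f → ∃ c : Fin m.natDegree → Polynomial K,
      f = ∑ i, toA m (c i) * W i

/-- The rational function `r ∈ K(x)` has no pole at `a`: `r = p/q` with `q(a) ≠ 0`. -/
def NoPoleAt {K F : Type} [Field K] [Field F] [Algebra K F] (a : F) (r : RatFunc K) : Prop :=
  ∃ p q : Polynomial K, Polynomial.aeval a q ≠ 0 ∧
    r * algebraMap (Polynomial K) (RatFunc K) q = algebraMap (Polynomial K) (RatFunc K) p

/-- `W` is a local integral basis of `A` at `a`: a `K(x)`-vector-space basis consisting of
elements that are locally integral at `a`, such that every element of `A` that is locally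
integral at `a` is a linear combination of `W` with coefficients in `K(x)_a` (rational
functions without a pole at `a`). -/
def IsLocalIntegralBasisAt {K F : Type} [Field K] [Field F] [Algebra K F]
    {m : Polynomial (RatFunc K)} {a : F} (σ : EmbFamily K F m a)
    (W : Fin m.natDegree → AdjoinRoot m) : Prop :=
  IsKxBasis W ∧ (∀ i, LocIntegralAt σ (W i)) ∧
    ∀ f, LocIntegralAt σ f → ∃ c : Fin m.natDegree → RatFunc K,
      (∀ i, NoPoleAt a (c i)) ∧ f = ∑ i, algebraMap (RatFunc K) (AdjoinRoot m) (c i) * W i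

namespace HahnSeries

variable {F : Type} [Field F]

lemma hval_eq_orderTop (P : HahnSeries ℚ F) : hval P = P.orderTop := by
  by_cases h : P = 0
  · simp [hval, h]
  · rw [hval, dif_neg h, orderTop_of_ne_zero h]

lemma coeff_hderiv (P : HahnSeries ℚ F) (q : ℚ) :
    (hderiv P).coeff q = ((q + 1 : ℚ) : F) * P.coeff (q + 1) := rfl

lemma orderTop_hderiv_le [CharZero F] {P : HahnSeries ℚ F} (hP : P ≠ 0) (h0 : P.order ≠ 0) :
    (hderiv P).orderTop ≤ ((P.order - 1 : ℚ) : WithTop ℚ) := by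
  apply orderTop_le_of_coeff_ne_zero
  rw [coeff_hderiv, sub_add_cancel]
  exact mul_ne_zero (Rat.cast_ne_zero.mpr h0) (coeff_order_eq_zero.not.mpr hP)

lemma orderTop_nonneg_of_neg_one_le_orderTop_hderiv [CharZero F] {P : HahnSeries ℚ F}
    (h : ((-1 : ℚ) : WithTop ℚ) ≤ (hderiv P).orderTop) : 0 ≤ P.orderTop := by
  by_contra! hneg
  have hP : P ≠ 0 := by rintro rfl; simp at hneg
  rw [orderTop_of_ne_zero hP, ← order_of_ne hP] at hneg
  have hlt : P.order < 0 := by exact_mod_cast hneg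
  have := h.trans (orderTop_hderiv_le hP hlt.ne)
  linarith [WithTop.coe_le_coe.mp this]

lemma neg_one_le_orderTop_of_orderTop_le_one {x y : HahnSeries ℚ F} (hx : x.orderTop ≤ 1)
    (hxy : 0 ≤ (x * y).orderTop) : ((-1 : ℚ) : WithTop ℚ) ≤ y.orderTop := by
  rw [orderTop_mul] at hxy
  lift x.orderTop to ℚ using ne_top_of_le_ne_top WithTop.one_ne_top hx with α
  by_cases hy : y = 0
  · simp [hy]
  rw [orderTop_of_ne_zero hy, ← order_of_ne hy] at hxy ⊢
  have hα : α ≤ 1 := by exact_mod_cast hx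
  have hαy : 0 ≤ α + y.order := by exact_mod_cast hxy
  exact WithTop.coe_le_coe.mpr (by linarith)

lemma orderTop_ofPowerSeries_nonneg (x : PowerSeries F) :
    0 ≤ (ofPowerSeries ℚ F x).orderTop := by
  rw [ofPowerSeries_apply, orderTop_embDomain]
  induction (toPowerSeries.symm x).orderTop with
  | top => exact le_top
  | coe n => exact WithTop.coe_le_coe.mpr (Nat.cast_nonneg n)

end HahnSeries

section LinearAlgebra

open Matrix

lemma Matrix.sum_vecMul_smul {R M ι κ : Type*} [CommSemiring R] [AddCommMonoid M] [Module R M]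
    [Fintype ι] [Fintype κ] (q : ι → R) (T : Matrix ι κ R) (U : κ → M) :
    ∑ j, (q ᵥ* T) j • U j = ∑ i, q i • ∑ j, T i j • U j := by
  simp only [vecMul, dotProduct, Finset.sum_smul, Finset.smul_sum, mul_smul]
  exact Finset.sum_comm

lemma Matrix.dvd_det_mul_of_vecMul_eq_smul {R n : Type*} [CommRing R] [Fintype n]
    [DecidableEq n] {T : Matrix n n R} {q c : n → R} {u : R} (h : q ᵥ* T = u • c) (i : n) :
    u ∣ T.det * q i := by
  have hq : T.det • q = u • (c ᵥ* T.adjugate) := by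
    rw [← smul_vecMul, ← h, vecMul_vecMul, mul_adjugate, vecMul_smul, vecMul_one]
  exact ⟨(c ᵥ* T.adjugate) i, by simpa using congrFun hq i⟩

end LinearAlgebra

lemma dvd_of_forall_dvd_mul {α ι : Type*} [CommMonoidWithZero α] [NormalizedGCDMonoid α]
    [Fintype ι] {u a : α} {q : ι → α} (hqu : ∀ p, p ∣ u → (∀ i, p ∣ q i) → IsUnit p)
    (h : ∀ i, u ∣ a * q i) : u ∣ a := by
  have hgcd : u ∣ a * Finset.univ.gcd q :=
    (Finset.dvd_gcd fun i _ => h i).trans (Finset.gcd_mul_left' _ _ a).dvd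
  have hrel : IsRelPrime u (Finset.univ.gcd q) := fun p hpu hpq =>
    hqu p hpu fun i => hpq.trans (Finset.gcd_dvd (Finset.mem_univ i))
  exact hrel.dvd_of_dvd_mul_right hgcd

section FunctionField

variable {K : Type} [Field K] {m : Polynomial (RatFunc K)}

lemma toA_eq_algebraMap (p : K[X]) : toA m p = algebraMap K[X] (AdjoinRoot m) p :=
  (IsScalarTower.algebraMap_apply K[X] (RatFunc K) (AdjoinRoot m) p).symm

lemma toA_mul (p r : K[X]) : toA m (p * r) = toA m p * toA m r := by
  simp only [toA_eq_algebraMap, map_mul]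

lemma toA_mul_eq_smul (p : K[X]) (f : AdjoinRoot m) : toA m p * f = p • f := by
  rw [toA_eq_algebraMap, Algebra.smul_def]

lemma toA_mul_sum_div [Fact (Irreducible m)] {ι : Type*} [Fintype ι] {u : K[X]} (hu : u ≠ 0)
    (q : ι → K[X]) (w : ι → AdjoinRoot m) :
    toA m u * ∑ i, toA m (q i) / toA m u * w i = ∑ i, q i • w i := by
  have hu' : toA m u ≠ 0 := by
    rw [toA_eq_algebraMap, IsScalarTower.algebraMap_apply K[X] (RatFunc K) (AdjoinRoot m)]
    exact (_root_.map_ne_zero _).mpr ((map_ne_zero_iff _ (IsFractionRing.injective _ _)).mpr hu)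
  simp only [Finset.mul_sum, ← mul_assoc, mul_div_cancel₀ _ hu', toA_mul_eq_smul]

variable {F : Type} [Field F] [Algebra K F] {a : F}

lemma EmbFamily.emb_toA (σ : EmbFamily K F m a) (i : Fin m.natDegree) (p : K[X]) :
    σ.emb i (toA m p) = HahnSeries.ofPowerSeries ℚ F (taylor a (p.map (algebraMap K F))) := by
  simp_rw [toA_eq_algebraMap]
  show ((σ.emb i).comp (algebraMap K[X] (AdjoinRoot m))) p =
    ((HahnSeries.ofPowerSeries ℚ F).comp (Polynomial.coeToPowerSeries.ringHom.comp
      ((taylorAlgHom a).toRingHom.comp (mapRingHom (algebraMap K F))))) p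
  congr 1
  refine Polynomial.ringHom_ext (fun c => ?_) ?_
  · simpa [toA_eq_algebraMap, HahnSeries.C_apply] using σ.emb_C i c
  · simpa [toA_eq_algebraMap, HahnSeries.C_apply, add_comm] using σ.emb_X i

lemma EmbFamily.coeff_emb_toA_natCast (σ : EmbFamily K F m a) (i : Fin m.natDegree) (p : K[X])
    (n : ℕ) : (σ.emb i (toA m p)).coeff n = (taylor a (p.map (algebraMap K F))).coeff n := by
  rw [σ.emb_toA, HahnSeries.ofPowerSeries_apply_coeff, Polynomial.coeff_coe]

lemma EmbFamily.orderTop_emb_toA_nonneg (σ : EmbFamily K F m a) (i : Fin m.natDegree)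
    (p : K[X]) : 0 ≤ (σ.emb i (toA m p)).orderTop := by
  rw [σ.emb_toA]
  exact HahnSeries.orderTop_ofPowerSeries_nonneg _

/-- A separable polynomial cannot vanish at `a` together with its derivative, so one of the
first two Taylor coefficients at `a` is nonzero. -/
lemma EmbFamily.orderTop_emb_toA_le_one (σ : EmbFamily K F m a) (i : Fin m.natDegree)
    {p : K[X]} (hp : p.Separable) : (σ.emb i (toA m p)).orderTop ≤ 1 := by
  by_cases hpa : aeval a p = 0
  · have hcoeff : (σ.emb i (toA m p)).coeff ((1 : ℕ) : ℚ) ≠ 0 := by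
      rw [σ.coeff_emb_toA_natCast, taylor_coeff_one, derivative_map, eval_map_algebraMap]
      exact hp.aeval_derivative_ne_zero hpa
    exact (HahnSeries.orderTop_le_of_coeff_ne_zero hcoeff).trans (by norm_num)
  · have hcoeff : (σ.emb i (toA m p)).coeff ((0 : ℕ) : ℚ) ≠ 0 := by
      rwa [σ.coeff_emb_toA_natCast, taylor_coeff_zero, eval_map_algebraMap]
    exact (HahnSeries.orderTop_le_of_coeff_ne_zero hcoeff).trans (by norm_num)

variable {σ : EmbFamily K F m a}

lemma locIntegralAt_iff_orderTop (f : AdjoinRoot m) :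
    LocIntegralAt σ f ↔ ∀ i, 0 ≤ (σ.emb i f).orderTop := by
  simp only [LocIntegralAt, HahnSeries.hval_eq_orderTop]

lemma LocIntegralAt.sum_toA_mul {ι : Type*} [Fintype ι] {w : ι → AdjoinRoot m}
    (hw : ∀ i, LocIntegralAt σ (w i)) (c : ι → K[X]) :
    LocIntegralAt σ (∑ i, toA m (c i) * w i) := by
  rw [locIntegralAt_iff_orderTop]
  intro j
  rw [map_sum]
  refine Finset.sum_induction _ (fun P : HahnSeries ℚ F => 0 ≤ P.orderTop)
    (fun P Q hP hQ => (le_min hP hQ).trans HahnSeries.min_orderTop_le_orderTop_add)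
    (by simp) fun i _ => ?_
  rw [map_mul, HahnSeries.orderTop_mul]
  exact add_nonneg (σ.orderTop_emb_toA_nonneg j (c i)) ((locIntegralAt_iff_orderTop _).mp (hw i) j)

lemma LocIntegralAt.of_toA_mul_D [CharZero F] {D : AdjoinRoot m → AdjoinRoot m}
    (hσ : IsDiffFamily D σ) {p : K[X]} (hp : p.Separable) {g : AdjoinRoot m}
    (h : LocIntegralAt σ (toA m p * D g)) : LocIntegralAt σ g := by
  rw [locIntegralAt_iff_orderTop] at h ⊢
  intro i
  have hi := h i
  rw [map_mul, hσ i g] at hi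
  exact HahnSeries.orderTop_nonneg_of_neg_one_le_orderTop_hderiv
    (HahnSeries.neg_one_le_orderTop_of_orderTop_le_one (σ.orderTop_emb_toA_le_one i hp) hi)

end FunctionField

theorem u_divides_detT_general {K : Type} [Field K] [CharZero K]
    (m : Polynomial (RatFunc K)) [Fact (Irreducible m)]
    (D : AdjoinRoot m → AdjoinRoot m)
    (σ : ∀ a : AlgebraicClosure K, EmbFamily K (AlgebraicClosure K) m a)
    (hσ : ∀ a, IsDiffFamily D (σ a))
    (W U : Fin m.natDegree → AdjoinRoot m)
    (e : Polynomial K)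
    -- `W` is a suitable basis:
    (hesqf : Squarefree e) (hWint : ∀ i, IntegralElem σ (W i))
    -- `U` is an integral basis and `W = TU`:
    (hU : IsIntegralBasis σ U)
    (T : Matrix (Fin m.natDegree) (Fin m.natDegree) (Polynomial K))
    (hWT : ∀ i, W i = ∑ j, toA m (T i j) * U j)
    (h : AdjoinRoot m) (hc : Fin m.natDegree → Polynomial K) (d : Polynomial K)
    -- `h = Σ (h_i/(de)) ω_i`:
    (hrep : toA m d * toA m e * h = ∑ i, toA m (hc i) * W i)
    (hde : IsCoprime d e)
    (hdsqf : Squarefree d)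
    -- `h = (Σ (q_i/u) ω_i)′` with `gcd(q₁,…,qₙ, u) = 1`:
    (u : Polynomial K) (q : Fin m.natDegree → Polynomial K) (hu0 : u ≠ 0)
    (hint : h = D (∑ i, toA m (q i) / toA m u * W i))
    (hqu : ∀ p : Polynomial K, p ∣ u → (∀ i, p ∣ q i) → IsUnit p) :
    u ∣ T.det ∧
      ∃ w : Polynomial K,
        Algebra.discr (RatFunc K) W =
          Algebra.discr (RatFunc K) U * algebraMap (Polynomial K) (RatFunc K) (u ^ 2 * w) := by
  set g := ∑ i, toA m (q i) / toA m u * W i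
  have hsep : (d * e).Separable := PerfectField.separable_iff_squarefree.mpr
    (squarefree_mul_iff.mpr ⟨hde.isRelPrime, hdsqf, hesqf⟩)
  have hg : IntegralElem σ g := fun a => LocIntegralAt.of_toA_mul_D (hσ a) hsep <| by
    rw [← hint, toA_mul, hrep]
    exact LocIntegralAt.sum_toA_mul (fun i => hWint i a) hc
  obtain ⟨c, hgc⟩ := hU.2.2 g hg
  have hqT : Matrix.vecMul q T = u • c := by
    refine funext <| Fintype.linearIndependent_iffₛ.mp
      (hU.1.1.restrict_scalars' (R := K[X])) _ _ ?_
    calc ∑ j, Matrix.vecMul q T j • U j = ∑ i, q i • W i := by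
          simp only [Matrix.sum_vecMul_smul, hWT, toA_mul_eq_smul]
      _ = toA m u * g := (toA_mul_sum_div hu0 q W).symm
      _ = ∑ j, (u • c) j • U j := by
          simp only [hgc, toA_mul_eq_smul, Finset.smul_sum, Pi.smul_apply, smul_eq_mul, mul_smul]
  have hudet : u ∣ T.det :=
    dvd_of_forall_dvd_mul hqu (Matrix.dvd_det_mul_of_vecMul_eq_smul hqT)
  obtain ⟨v, hv⟩ := hudet
  have hWTU : W = Matrix.mulVec ((T.map (algebraMap K[X] (RatFunc K))).map
      (algebraMap (RatFunc K) (AdjoinRoot m))) U := funext fun i => by rw [hWT i]; rfl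
  refine ⟨⟨v, hv⟩, v ^ 2, ?_⟩
  rw [hWTU, Algebra.discr_of_matrix_mulVec, ← RingHom.mapMatrix_apply, ← RingHom.map_det, hv]
  simp only [map_mul, map_pow]
  ring

/-- Let `W` be a suitable basis of `A` with `eW′ = MW`, let `U` be an integral
basis of `A`, and let `T ∈ K[x]^{n×n}` be such that `W = TU`. Let `h = Σ (h_i/(de)) ω_i`
with `gcd(d, e) = 1`, `gcd(h₁,…,hₙ, d) = 1`, and `d` squarefree. If `h` is integrable in
`A`, say `h = (Σ (q_i/u) ω_i)′` with `gcd(q₁,…,qₙ, u) = 1`, then `u` divides `det(T)`;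
hence `u²` divides the polynomial `Disc(W)/Disc(U)`. -/
theorem u_divides_detT {K : Type} [Field K] [CharZero K]
    (m : Polynomial (RatFunc K)) [Fact (Irreducible m)]
    (D : AdjoinRoot m → AdjoinRoot m) (hD : IsDerivationOnA m D)
    (σ : ∀ a : AlgebraicClosure K, EmbFamily K (AlgebraicClosure K) m a)
    (hσ : ∀ a, IsDiffFamily D (σ a))
    (W U : Fin m.natDegree → AdjoinRoot m)
    (e : Polynomial K) (M : Matrix (Fin m.natDegree) (Fin m.natDegree) (Polynomial K))
    -- `W` is a suitable basis:
    (hWb : IsKxBasis W) (hrel : DerivRel D W e M) (hgcd : GcdOne e M)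
    (hesqf : Squarefree e) (hWint : ∀ i, IntegralElem σ (W i))
    -- `U` is an integral basis and `W = TU`:
    (hU : IsIntegralBasis σ U)
    (T : Matrix (Fin m.natDegree) (Fin m.natDegree) (Polynomial K))
    (hWT : ∀ i, W i = ∑ j, toA m (T i j) * U j)
    (h : AdjoinRoot m) (hc : Fin m.natDegree → Polynomial K) (d : Polynomial K)
    (hd0 : d ≠ 0) (he0 : e ≠ 0)
    -- `h = Σ (h_i/(de)) ω_i`:
    (hrep : toA m d * toA m e * h = ∑ i, toA m (hc i) * W i)
    (hde : IsCoprime d e)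
    (hhd : ∀ p : Polynomial K, p ∣ d → (∀ i, p ∣ hc i) → IsUnit p)
    (hdsqf : Squarefree d)
    -- `h = (Σ (q_i/u) ω_i)′` with `gcd(q₁,…,qₙ, u) = 1`:
    (u : Polynomial K) (q : Fin m.natDegree → Polynomial K) (hu0 : u ≠ 0)
    (hint : h = D (∑ i, toA m (q i) / toA m u * W i))
    (hqu : ∀ p : Polynomial K, p ∣ u → (∀ i, p ∣ q i) → IsUnit p) :
    u ∣ T.det ∧
      ∃ w : Polynomial K,
        Algebra.discr (RatFunc K) W =
          Algebra.discr (RatFunc K) U * algebraMap (Polynomial K) (RatFunc K) (u ^ 2 * w) :=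
  u_divides_detT_general m D σ hσ W U e hesqf hWint hU T hWT h hc d hrep hde hdsqf u q hu0 hint hqu
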